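/- With P_h and Q_h the convergent polynomials of the square series J-fraction, for every h ≥ 1 and every 0 ≤ n < 2h, the coefficient of z^n in the formal power series expansion of P_h(q,z)/Q_h(q,z) equals q^{n²}. -/

import Mathlib

/-- The rational function field in the indeterminate `q`. -/
noncomputable abbrev Kq : Type := RatFunc ℚ

/-- The indeterminate `q` of the rational function field. -/
noncomputable def qvar : Kq := RatFunc.X

/-- The numerator convergents `P_h(q, z)`, as formal power series in `z = X` over the field of
rational functions in `q`. -/
noncomputable def Pser : ℕ → PowerSeries Kq
  | 0 => 0
  | 1 => 1
  | (h + 2) =>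
      (1 - PowerSeries.C (qvar ^ (2 * (h + 2) - 3) *
            (qvar ^ (2 * (h + 2)) + qvar ^ (2 * (h + 2) - 2) - 1)) * PowerSeries.X) *
          Pser (h + 1)
        - PowerSeries.C (qvar ^ (6 * (h + 2) - 10) * (qvar ^ (2 * (h + 2) - 2) - 1)) *
            PowerSeries.X ^ 2 * Pser h

/-- The denominator convergents `Q_h(q, z)`, as formal power series in `z = X` over the field of
rational functions in `q`. -/
noncomputable def Qser : ℕ → PowerSeries Kq
  | 0 => 1
  | 1 => 1 - PowerSeries.C qvar * PowerSeries.X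
  | (h + 2) =>
      (1 - PowerSeries.C (qvar ^ (2 * (h + 2) - 3) *
            (qvar ^ (2 * (h + 2)) + qvar ^ (2 * (h + 2) - 2) - 1)) * PowerSeries.X) *
          Qser (h + 1)
        - PowerSeries.C (qvar ^ (6 * (h + 2) - 10) * (qvar ^ (2 * (h + 2) - 2) - 1)) *
            PowerSeries.X ^ 2 * Qser h

/-!
Let `F = ∑ q^{n²} zⁿ`. The claim is that `F·Q_h - P_h` is divisible by `z^{2h}`, since then
`P_h / Q_h = F - (F·Q_h - P_h) / Q_h` agrees with `F` below `z^{2h}`.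

Because `P_h` has degree `< h`, the coefficient of `z^{h+w}` in `F·Q_h - P_h` is that of `F·Q_h`,
which has the closed form `q^{h²+w²} ∏_{j<h} (q^{2w} - q^{2j})`: it satisfies the three-term
recurrence of the `Q_h`, and it vanishes for `w < h` (factor `j = w`). The recurrence of
`F·Q_h - P_h` then gains two orders of divisibility by `z` from the two new coefficients,
`w = h` and `w = h + 1`, which are zero by the closed form.
-/

open PowerSeries Finset

section ClosedForm

variable {R : Type*} [CommRing R]

-- `cq q h` and `abq q h` are the paper's `c_{h+2}(q)` and `ab_{h+2}(q)`.
def cq (q : R) (h : ℕ) : R := q ^ (2 * h + 1) * (q ^ (2 * h + 4) + q ^ (2 * h + 2) - 1)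

def abq (q : R) (h : ℕ) : R := q ^ (6 * h + 2) * (q ^ (2 * h + 2) - 1)

def squareTailCoeff (q : R) (h w : ℕ) : R :=
  q ^ (h ^ 2 + w ^ 2) * ∏ j ∈ range h, (q ^ (2 * w) - q ^ (2 * j))

theorem squareTailCoeff_eq_zero {q : R} {h w : ℕ} (hw : w < h) : squareTailCoeff q h w = 0 :=
  mul_eq_zero_of_right _ (prod_eq_zero (mem_range.2 hw) (sub_self _))

theorem squareTailCoeff_add_two (q : R) (h w : ℕ) :
    squareTailCoeff q (h + 2) w = squareTailCoeff q (h + 1) (w + 1)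
      - cq q h * squareTailCoeff q (h + 1) w - abq q h * squareTailCoeff q h w := by
  have shift : ∏ j ∈ range (h + 1), (q ^ (2 * (w + 1)) - q ^ (2 * j))
      = (q ^ (2 * (w + 1)) - 1) * q ^ (2 * h) * ∏ j ∈ range h, (q ^ (2 * w) - q ^ (2 * j)) :=
    calc ∏ j ∈ range (h + 1), (q ^ (2 * (w + 1)) - q ^ (2 * j))
        = (∏ j ∈ range h, (q ^ 2 * (q ^ (2 * w) - q ^ (2 * j)))) * (q ^ (2 * (w + 1)) - 1) := by
          rw [prod_range_succ', mul_zero, pow_zero]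
          congr 1
          exact prod_congr rfl fun j _ => by ring
      _ = _ := by rw [prod_mul_distrib, prod_const, card_range, ← pow_mul]; ring
  simp only [squareTailCoeff, cq, abq, shift, prod_range_succ]
  ring

end ClosedForm

theorem coeff_add_two_recurrence {R : Type*} [CommRing R] (a b : R) (A B : PowerSeries R)
    (n : ℕ) :
    coeff (n + 2) ((1 - C a * X) * A - C b * X ^ 2 * B)
      = coeff (n + 2) A - a * coeff (n + 1) A - b * coeff n B := by
  have : (1 - C a * X) * A - C b * X ^ 2 * B = A - C a * (X * A) - C b * (X * (X * B)) := by
    ring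
  rw [this, map_sub, map_sub, coeff_C_mul, coeff_C_mul, coeff_succ_X_mul, coeff_succ_X_mul,
    coeff_succ_X_mul]

theorem Qser_add_two (h : ℕ) :
    Qser (h + 2) = (1 - C (cq qvar h) * X) * Qser (h + 1) - C (abq qvar h) * X ^ 2 * Qser h := rfl

theorem Pser_add_two (h : ℕ) :
    Pser (h + 2) = (1 - C (cq qvar h) * X) * Pser (h + 1) - C (abq qvar h) * X ^ 2 * Pser h := rfl

theorem constantCoeff_Qser (h : ℕ) : constantCoeff (Qser h) = 1 := by
  induction h using Nat.twoStepInduction with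
  | zero => simp [Qser]
  | one => simp [Qser]
  | more h _ ih => simp [Qser_add_two, ih]

theorem coeff_Pser_of_le {h n : ℕ} (hn : h ≤ n) : coeff n (Pser h) = 0 := by
  induction h using Nat.twoStepInduction generalizing n with
  | zero => simp [Pser]
  | one => simp [Pser, coeff_one, Nat.one_le_iff_ne_zero.1 hn]
  | more h ih₀ ih₁ =>
    obtain ⟨m, rfl⟩ : ∃ m, n = m + 2 := ⟨n - 2, by omega⟩
    rw [Pser_add_two, coeff_add_two_recurrence, ih₁ (by omega), ih₁ (by omega), ih₀ (by omega)]
    ring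

noncomputable def squareSeries : PowerSeries Kq := mk fun n => qvar ^ (n ^ 2)

theorem coeff_squareSeries_mul_Qser (h w : ℕ) :
    coeff (h + w) (squareSeries * Qser h) = squareTailCoeff qvar h w := by
  induction h using Nat.twoStepInduction generalizing w with
  | zero => simp [Qser, squareSeries, squareTailCoeff]
  | one =>
    have : squareSeries * Qser 1 = squareSeries - C qvar * (X * squareSeries) := by
      rw [Qser]; ring
    rw [this, add_comm, map_sub, coeff_C_mul, coeff_succ_X_mul, squareSeries, coeff_mk, coeff_mk,
      squareTailCoeff]
    simp only [range_one, prod_singleton]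
    ring
  | more h ih₀ ih₁ =>
    have : squareSeries * Qser (h + 2) = (1 - C (cq qvar h) * X) * (squareSeries * Qser (h + 1))
        - C (abq qvar h) * X ^ 2 * (squareSeries * Qser h) := by
      rw [Qser_add_two]; ring
    rw [this, show h + 2 + w = h + w + 2 by ring, coeff_add_two_recurrence,
      show h + w + 2 = h + 1 + (w + 1) by ring, show h + w + 1 = h + 1 + w by ring, ih₁, ih₁, ih₀,
      squareTailCoeff_add_two]

theorem coeff_squareSeries_mul_Qser_sub_Pser {h n : ℕ} (hhn : h ≤ n) (hn : n < 2 * h) :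
    coeff n (squareSeries * Qser h - Pser h) = 0 := by
  obtain ⟨w, rfl⟩ := Nat.exists_eq_add_of_le hhn
  rw [map_sub, coeff_squareSeries_mul_Qser, coeff_Pser_of_le hhn,
    squareTailCoeff_eq_zero (by omega), sub_zero]

theorem X_pow_dvd_squareSeries_mul_Qser_sub_Pser (h : ℕ) :
    X ^ (2 * h) ∣ squareSeries * Qser h - Pser h := by
  induction h using Nat.twoStepInduction with
  | zero => simp
  | one =>
    refine X_pow_dvd_iff.2 fun m hm => ?_
    rcases Nat.lt_or_ge m 1 with hm1 | hm1
    · simp [Nat.lt_one_iff.1 hm1, Qser, Pser, squareSeries]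
    · exact coeff_squareSeries_mul_Qser_sub_Pser hm1 hm
  | more h ih₀ ih₁ =>
    have hrec : squareSeries * Qser (h + 2) - Pser (h + 2)
        = (1 - C (cq qvar h) * X) * (squareSeries * Qser (h + 1) - Pser (h + 1))
          - C (abq qvar h) * X ^ 2 * (squareSeries * Qser h - Pser h) := by
      rw [Qser_add_two, Pser_add_two]; ring
    have hlow : X ^ (2 * (h + 1)) ∣ squareSeries * Qser (h + 2) - Pser (h + 2) := by
      rw [hrec]
      refine dvd_sub (dvd_mul_of_dvd_right ih₁ _) ?_
      rw [show 2 * (h + 1) = 2 + 2 * h by ring, pow_add]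
      exact mul_dvd_mul (dvd_mul_left _ _) ih₀
    refine X_pow_dvd_iff.2 fun m hm => ?_
    rcases Nat.lt_or_ge m (2 * (h + 1)) with hm2 | hm2
    · exact X_pow_dvd_iff.1 hlow m hm2
    · exact coeff_squareSeries_mul_Qser_sub_Pser (by omega) hm

theorem stmt8_general (h n : ℕ) (hn : n < 2 * h) :
    PowerSeries.coeff n (Pser h * (Qser h)⁻¹) = qvar ^ (n ^ 2) := by
  set D := squareSeries * Qser h - Pser h
  have hQ : Qser h * (Qser h)⁻¹ = 1 :=
    PowerSeries.mul_inv_cancel _ (by rw [constantCoeff_Qser]; exact one_ne_zero)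
  have hsplit : Pser h * (Qser h)⁻¹ = squareSeries - D * (Qser h)⁻¹ := by
    linear_combination squareSeries * hQ
  have hD : coeff n (D * (Qser h)⁻¹) = 0 :=
    X_pow_dvd_iff.1 (dvd_mul_of_dvd_left (X_pow_dvd_squareSeries_mul_Qser_sub_Pser h) _) n hn
  rw [hsplit, map_sub, hD, sub_zero, squareSeries, coeff_mk]

theorem stmt8 (h n : ℕ) (hh : 1 ≤ h) (hn : n < 2 * h) :
    PowerSeries.coeff n (Pser h * (Qser h)⁻¹) = qvar ^ (n ^ 2) :=
  stmt8_general h n hn
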